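/- arXiv:math/0601182 — 3 statements merged into one kernel-verified Lean document; each statement's English description precedes it below -/
import Mathlib

section
/- The alternating sum Σ_{i=0}^{k-1} (-1)^i (k-1)! k! / (2^{k-1} (k+i)! (k-1-i)!) equals k / ((2k-1) 2^{k-1}). -/
/-!
Multiplying the `i`-th term by `(2k-1)!` turns it into `(-1)^i C(2k-1, k+i)` up to a factor
independent of `i`. By the symmetry `C(2k-1, k+i) = C(2k-1, k-1-i)` this is a partial alternating
sum of a row of Pascal's triangle, which telescopes to `C(2k-2, k-1)`.
-/

open Nat Finset

theorem alternating_sum_range_choose_upper_half (m : ℕ) :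
    ∑ i ∈ range (m + 1), (-1 : ℤ) ^ i * (2 * m + 1).choose (m + 1 + i) =
      (2 * m).choose m := by
  rw [← sum_range_reflect]
  have hterm : ∀ j ∈ range (m + 1),
      (-1 : ℤ) ^ (m + 1 - 1 - j) * (2 * m + 1).choose (m + 1 + (m + 1 - 1 - j)) =
        (-1) ^ m * ((-1) ^ j * (2 * m + 1).choose j) := by
    intro j hj
    have hjm : j ≤ m := Nat.lt_succ_iff.mp (mem_range.mp hj)
    have hsign : (-1 : ℤ) ^ m = (-1) ^ (m - j) * (-1) ^ j := by
      rw [← pow_add, Nat.sub_add_cancel hjm]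
    rw [Nat.add_sub_cancel,
      Nat.choose_symm_of_eq_add (by omega : 2 * m + 1 = (m + 1 + (m - j)) + j), hsign,
      mul_assoc, ← mul_assoc ((-1 : ℤ) ^ j), ← pow_add, ← two_mul, pow_mul]
    simp
  rw [sum_congr rfl hterm, ← mul_sum, Int.alternating_sum_range_choose_eq_choose, ← mul_assoc,
    ← pow_add, ← two_mul, pow_mul]
  simp

theorem Nat.factorial_mul_factorial_succ_mul_choose (m : ℕ) :
    m ! * (m + 1)! * (2 * m).choose m * (2 * m + 1) = (m + 1) * (2 * m + 1)! := by
  have h := Nat.choose_mul_factorial_mul_factorial (Nat.le_mul_of_pos_left m two_pos)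
  rw [show 2 * m - m = m by omega] at h
  rw [Nat.factorial_succ, Nat.factorial_succ, ← h]
  ring

/-- `Σ_{i=0}^{k-1} (-1)^i (k-1)! k! / (2^{k-1} (k+i)! (k-1-i)!) = k / ((2k-1) 2^{k-1})`. -/
theorem stmt_5 (k : ℕ) (hk : 1 ≤ k) :
    ∑ i ∈ Finset.range k,
        (-1 : ℚ) ^ i * ((k - 1)! : ℚ) * (k ! : ℚ) /
          ((2 : ℚ) ^ (k - 1) * ((k + i)! : ℚ) * ((k - 1 - i)! : ℚ)) =
      (k : ℚ) / (((2 * k : ℚ) - 1) * 2 ^ (k - 1)) := by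
  obtain ⟨m, rfl⟩ : ∃ m, k = m + 1 := ⟨k - 1, by omega⟩
  simp only [Nat.add_sub_cancel]
  have hterm : ∀ i ∈ range (m + 1),
      (-1 : ℚ) ^ i * m ! * (m + 1)! / (2 ^ m * (m + 1 + i)! * (m - i)!) =
        m ! * (m + 1)! / (2 ^ m * (2 * m + 1)!) *
          (((-1 : ℤ) ^ i * (2 * m + 1).choose (m + 1 + i) : ℤ) : ℚ) := by
    intro i hi
    have him : i ≤ m := Nat.lt_succ_iff.mp (mem_range.mp hi)
    push_cast
    rw [Nat.cast_choose ℚ (by omega), show 2 * m + 1 - (m + 1 + i) = m - i by omega]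
    field_simp
  have hid : ((m ! * (m + 1)! * (2 * m).choose m * (2 * m + 1) : ℕ) : ℚ) =
      ((m + 1) * (2 * m + 1)! : ℕ) :=
    congrArg _ (Nat.factorial_mul_factorial_succ_mul_choose m)
  rw [sum_congr rfl hterm, ← mul_sum, ← Int.cast_sum, alternating_sum_range_choose_upper_half]
  push_cast at hid ⊢
  have hodd : (2 * ((m : ℚ) + 1) - 1) = 2 * m + 1 := by ring
  rw [hodd]
  field_simp
  linear_combination hid
end

section
/- For i ≥ 1 the coefficient identity 2i·A_{i,j} + (k-i-j)·A_{i-1,j} + (2i(k-i-j)/j)·A_{i,j-1} = 0 holds for the closed-form coefficients A_{i,j} for all i ≥ 1, j ≥ 1, i+j ≤ k-1. -/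
open Nat

/-- The closed-form Chern–Simons coefficient `A_{i,j}`, extended by `0` out of range. -/
noncomputable def csA (k i j : ℕ) : ℚ :=
  if i + j ≤ k - 1 then
    (-1) ^ i * ((i + j)! : ℚ) * ((k - j - 1)! : ℚ) * (k ! : ℚ) /
      (2 ^ i * ((k - i - j - 1)! : ℚ) * (i ! : ℚ) * ((k + i)! : ℚ) * (j ! : ℚ))
  else 0

/-- The coefficient identity `2i·A_{i,j} + (k-i-j)·A_{i-1,j} + (2i(k-i-j)/j)·A_{i,j-1} = 0`
for the closed-form coefficients, `i ≥ 1`, `j ≥ 1`, `i+j ≤ k-1`. -/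
theorem stmt_8 (k i j : ℕ) (hk : 1 ≤ k) (hi : 1 ≤ i) (hj : 1 ≤ j) (hij : i + j ≤ k - 1) :
    2 * (i : ℚ) * csA k i j + ((k : ℚ) - i - j) * csA k (i - 1) j
      + ((2 * (i : ℚ) * ((k : ℚ) - i - j)) / j) * csA k i (j - 1) = 0 := by
  obtain ⟨a, rfl⟩ : ∃ a, i = a + 1 := ⟨i - 1, by omega⟩
  obtain ⟨b, rfl⟩ : ∃ b, j = b + 1 := ⟨j - 1, by omega⟩
  obtain ⟨c, rfl⟩ : ∃ c, k = a + b + c + 3 := ⟨k - a - b - 3, by omega⟩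
  simp only [csA, Nat.add_sub_cancel]
  rw [if_pos (by omega), if_pos (by omega), if_pos (by omega)]
  have e1 : a + b + c + 3 - (b + 1) - 1 = a + c + 1 := by omega
  have e2 : a + b + c + 3 - (a + 1) - (b + 1) - 1 = c := by omega
  have e3 : a + b + c + 3 - a - (b + 1) - 1 = c + 1 := by omega
  have e4 : a + b + c + 3 - b - 1 = a + c + 2 := by omega
  have e5 : a + b + c + 3 - (a + 1) - b - 1 = c + 1 := by omega
  have e6 : a + 1 + (b + 1) = a + b + 2 := by omega
  have e7 : a + (b + 1) = a + b + 1 := by omega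
  have e8 : a + 1 + b = a + b + 1 := by omega
  have e9 : a + b + c + 3 + (a + 1) = 2 * a + b + c + 4 := by omega
  have e10 : a + b + c + 3 + a = 2 * a + b + c + 3 := by omega
  rw [e1, e2, e3, e4, e5, e6, e7, e8, e9, e10]
  have f1 : ((a + b + 2)! : ℚ) = (a + b + 2) * (a + b + 1)! := by
    rw [show a + b + 2 = (a + b + 1) + 1 by omega, Nat.factorial_succ]; push_cast; ring
  have f2 : ((a + c + 2)! : ℚ) = (a + c + 2) * (a + c + 1)! := by
    rw [show a + c + 2 = (a + c + 1) + 1 by omega, Nat.factorial_succ]; push_cast; ring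
  have f3 : ((c + 1)! : ℚ) = (c + 1) * c ! := by
    rw [Nat.factorial_succ]; push_cast; ring
  have f4 : ((a + 1)! : ℚ) = (a + 1) * a ! := by
    rw [Nat.factorial_succ]; push_cast; ring
  have f5 : ((b + 1)! : ℚ) = (b + 1) * b ! := by
    rw [Nat.factorial_succ]; push_cast; ring
  have f6 : ((2 * a + b + c + 4)! : ℚ) = (2 * a + b + c + 4) * (2 * a + b + c + 3)! := by
    rw [show 2 * a + b + c + 4 = (2 * a + b + c + 3) + 1 by omega, Nat.factorial_succ]
    push_cast; ring
  rw [f1, f2, f3, f4, f5, f6]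
  have p1 : ((a + b + 1)! : ℚ) ≠ 0 := by positivity
  have p2 : ((a + c + 1)! : ℚ) ≠ 0 := by positivity
  have p3 : (c ! : ℚ) ≠ 0 := by positivity
  have p4 : (a ! : ℚ) ≠ 0 := by positivity
  have p5 : (b ! : ℚ) ≠ 0 := by positivity
  have p6 : ((2 * a + b + c + 3)! : ℚ) ≠ 0 := by positivity
  have p7 : (((a + b + c + 3)! : ℕ) : ℚ) ≠ 0 := by positivity
  have pa : (a : ℚ) + 1 ≠ 0 := by positivity
  have pb : (b : ℚ) + 1 ≠ 0 := by positivity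
  have pc : (c : ℚ) + 1 ≠ 0 := by positivity
  have pn : (2 : ℚ) * a + b + c + 4 ≠ 0 := by positivity
  have pw : (2 : ℚ) ^ a ≠ 0 := by positivity
  push_cast
  field_simp
  ring
end

section
/- The identity Σ_{i=0}^{k-1} (-1)^i binom(k-1, i) / binom(k+i, i) = k/(2k-1) holds for every positive integer k. -/
/-!
The sum is the case `m = k`, `n = k - 1` of `∑_{i ≤ n} (-1)^i C(n,i) / C(m+i,i) = m / (m+n)`.
Writing `r i = C(n,i) / C(m+i,i)`, the ratio rule `(m+i+1) r (i+1) = (n-i) r i` gives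
`(m+n) (-1)^i r i = (-1)^i (m+i) r i - (-1)^(i+1) (m+i+1) r (i+1)`, so `(m+n)` times the sum
telescopes to `m r 0 = m`.
-/

open Finset

variable {K : Type*} [Field K] [CharZero K]

lemma cast_choose_succ_right_mul (n i : ℕ) :
    (n.choose (i + 1) : K) * (i + 1) = n.choose i * (n - i) := by
  rcases le_or_gt i n with hi | hi
  · have h := congrArg (Nat.cast : ℕ → K) (Nat.choose_succ_right_eq n i)
    push_cast [Nat.cast_sub hi] at h
    exact h
  · simp [Nat.choose_eq_zero_of_lt hi, Nat.choose_eq_zero_of_lt (hi.trans i.lt_succ_self)]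

lemma add_succ_mul_choose_div_choose_succ (m n i : ℕ) :
    (m + i + 1 : K) * (n.choose (i + 1) / (m + i + 1).choose (i + 1)) =
      (n - i) * (n.choose i / (m + i).choose i) := by
  have hpascal : (m + i + 1 : K) * (m + i).choose i = (m + i + 1).choose (i + 1) * (i + 1) := by
    exact_mod_cast Nat.add_one_mul_choose_eq (m + i) i
  have h₀ : ((m + i).choose i : K) ≠ 0 := by exact_mod_cast (Nat.choose_pos (by omega)).ne'
  have h₁ : ((m + i + 1).choose (i + 1) : K) ≠ 0 := by exact_mod_cast (Nat.choose_pos (by omega)).ne'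
  have h₂ : (i + 1 : K) ≠ 0 := by exact_mod_cast i.succ_ne_zero
  field_simp
  refine mul_right_cancel₀ h₂ ?_
  linear_combination (m + i + 1 : K) * (m + i).choose i * cast_choose_succ_right_mul (K := K) n i
    + (n.choose i : K) * (n - i) * hpascal

theorem add_mul_sum_alternating_choose_div_choose (m n : ℕ) :
    (m + n : K) * ∑ i ∈ range (n + 1), (-1) ^ i * (n.choose i : K) / (m + i).choose i = m := by
  set r : ℕ → K := fun i => n.choose i / (m + i).choose i
  have hstep : ∀ i, (m + n : K) * ((-1) ^ i * (n.choose i : K) / (m + i).choose i) =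
      (-1) ^ i * (m + i) * r i - (-1) ^ (i + 1) * (m + (i + 1 : ℕ)) * r (i + 1) := by
    intro i
    have hratio := add_succ_mul_choose_div_choose_succ (K := K) m n i
    simp only [r]
    push_cast
    linear_combination -(-1 : K) ^ i * hratio
  rw [mul_sum, sum_congr rfl fun i _ => hstep i, sum_range_sub']
  simp [r]

theorem stmt_19_general (k : ℕ) :
    ∑ i ∈ Finset.range k,
        (-1 : ℚ) ^ i * ((k - 1).choose i : ℚ) / ((k + i).choose i : ℚ) =
      (k : ℚ) / (2 * (k : ℚ) - 1) := by
  cases k with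
  | zero => simp
  | succ n =>
    have h := add_mul_sum_alternating_choose_div_choose (K := ℚ) (n + 1) n
    rw [Nat.add_sub_cancel, eq_div_iff (by push_cast; ring_nf; positivity)]
    push_cast at h ⊢
    linear_combination h

/-- `Σ_{i=0}^{k-1} (-1)^i C(k-1,i) / C(k+i,i) = k/(2k-1)` for every positive integer `k`. -/
theorem stmt_19 (k : ℕ) (hk : 1 ≤ k) :
    ∑ i ∈ Finset.range k,
        (-1 : ℚ) ^ i * ((k - 1).choose i : ℚ) / ((k + i).choose i : ℚ) =
      (k : ℚ) / (2 * (k : ℚ) - 1) :=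
  stmt_19_general k
end
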